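/- Let q ∈ (0,1/2), θ ∈ [0,1], and w ∈ (0,1). Then sup_{λ∈ℝ} { λw − (1−θ)·log(e^λ(1−q) + q) − θ·log(e^λ q + (1−q)) } = w·log η − (1−θ)·log((1−q)η + q) − θ·log(qη + (1−q)), where τ = ((1−q)/q)·((1−θ)−w) + (q/(1−q))·(θ−w) and η = (−τ + √(τ² + 4w(1−w)))/(2(1−w)); moreover, the supremum is attained at λ = log η. -/
import Mathlib


noncomputable section

/-- The limiting scaled cumulant generating function
`Λ(λ) = (1−θ) log(e^λ(1−q) + q) + θ log(e^λ q + (1−q))`. -/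
def Lam (q θ l : ℝ) : ℝ :=
  (1-θ) * Real.log (Real.exp l * (1-q) + q) + θ * Real.log (Real.exp l * q + (1-q))

/-- `τ(q,θ,w) = ((1−q)/q)((1−θ)−w) + (q/(1−q))(θ−w)`. -/
def tauF (q θ w : ℝ) : ℝ := (1-q)/q * ((1-θ) - w) + q/(1-q) * (θ - w)

/-- `η(q,θ,w) = (−τ + √(τ² + 4w(1−w)))/(2(1−w))`. -/
def etaF (q θ w : ℝ) : ℝ :=
  (-(tauF q θ w) + Real.sqrt ((tauF q θ w)^2 + 4*w*(1-w))) / (2*(1-w))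

/-- The rate function `I_θ(w) = w log η − (1−θ) log((1−q)η + q) − θ log(qη + (1−q))`. -/
def rateI (q θ w : ℝ) : ℝ :=
  w * Real.log (etaF q θ w) - (1-θ) * Real.log ((1-q) * etaF q θ w + q)
    - θ * Real.log (q * etaF q θ w + (1-q))

/-- For `q ∈ (0,1/2)`, `θ ∈ [0,1]`, `w ∈ (0,1)`, the Legendre transform
`sup_{λ∈ℝ} {λw − (1−θ)log(e^λ(1−q)+q) − θ log(e^λ q+(1−q))}` equals `I_θ(w)` and is attained
at `λ = log η`. -/
theorem stmt16 (q θ w : ℝ) (hq : q ∈ Set.Ioo (0:ℝ) (1/2)) (hθ : θ ∈ Set.Icc (0:ℝ) 1)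
    (hw : w ∈ Set.Ioo (0:ℝ) 1) :
    (∀ l : ℝ, l * w - Lam q θ l ≤ rateI q θ w) ∧
    Real.log (etaF q θ w) * w - Lam q θ (Real.log (etaF q θ w)) = rateI q θ w := by
  obtain ⟨hq0, hq2⟩ := hq
  obtain ⟨hθ0, hθ1⟩ := hθ
  obtain ⟨hw0, hw1⟩ := hw
  have hq1 : q < 1 := by linarith
  set τ := tauF q θ w with hτ
  set η := etaF q θ w with hη
  clear_value τ η
  have hD : τ^2 < τ^2 + 4*w*(1-w) := by nlinarith
  have hDnn : (0:ℝ) ≤ τ^2 + 4*w*(1-w) := by nlinarith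
  have hsq : |τ| < Real.sqrt (τ^2 + 4*w*(1-w)) := by
    rw [← Real.sqrt_sq_eq_abs]
    exact Real.sqrt_lt_sqrt (sq_nonneg τ) hD
  have hnum : 0 < -τ + Real.sqrt (τ^2 + 4*w*(1-w)) := by
    have h1 : τ ≤ |τ| := le_abs_self τ
    linarith
  have hηpos : 0 < η := by
    rw [hη, etaF, ← hτ]
    exact div_pos hnum (by linarith)
  -- quadratic identity
  have hquad : (1-w)*η^2 + τ*η = w := by
    have h1 : 2*(1-w)*η = -τ + Real.sqrt (τ^2 + 4*w*(1-w)) := by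
      have h2w : (2:ℝ)*(1-w) ≠ 0 := ne_of_gt (by linarith)
      rw [hη, etaF, ← hτ, mul_div_cancel₀ _ h2w]
    have h2 : (2*(1-w)*η + τ)^2 = τ^2 + 4*w*(1-w) := by
      rw [h1]
      have : (-τ + Real.sqrt (τ^2 + 4*w*(1-w)) + τ)^2
          = Real.sqrt (τ^2 + 4*w*(1-w)) ^ 2 := by ring
      rw [this, Real.sq_sqrt hDnn]
    nlinarith [h2]
  have hq0' : q ≠ 0 := ne_of_gt hq0
  have hq1' : (1:ℝ) - q ≠ 0 := by linarith
  have hτq : τ * (q*(1-q)) = (1-q)^2*((1-θ)-w) + q^2*(θ-w) := by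
    rw [hτ, tauF]
    field_simp
  set A := η*(1-q) + q with hA
  set B := η*q + (1-q) with hB
  clear_value A B
  have hApos : 0 < A := by rw [hA]; nlinarith
  have hBpos : 0 < B := by rw [hB]; nlinarith
  set a := η*(1-q)/A with ha
  set b := η*q/B with hb
  clear_value a b
  have ha0 : 0 ≤ a := by
    rw [ha]; apply div_nonneg _ hApos.le; nlinarith
  have hb0 : 0 ≤ b := by
    rw [hb]; apply div_nonneg _ hBpos.le; nlinarith
  have ha1 : a ≤ 1 := by rw [ha, div_le_one hApos, hA]; linarith
  have hb1 : b ≤ 1 := by rw [hb, div_le_one hBpos, hB]; linarith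
  -- stationarity: (1-θ)*a + θ*b = w
  have hclear : (1-θ)*(η*(1-q))*B + θ*(η*q)*A = w*(A*B) := by
    rw [hA, hB]
    linear_combination (q*(1-q)) * hquad - η * hτq
  have hstat : (1-θ)*a + θ*b = w := by
    rw [ha, hb]
    field_simp
    linear_combination hclear
  have hexpL : Real.exp (Real.log η) = η := Real.exp_log hηpos
  have hLamL : Lam q θ (Real.log η) = (1-θ) * Real.log A + θ * Real.log B := by
    rw [Lam, hexpL, hA, hB]
  constructor
  · intro l
    set s := l - Real.log η with hs
    set u := Real.exp s with hu
    have hu0 : 0 < u := Real.exp_pos s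
    have hel : Real.exp l = η * u := by
      have : l = s + Real.log η := by rw [hs]; ring
      rw [this, Real.exp_add, hexpL, hu]; ring
    -- the two key log inequalities
    have bern : ∀ c : ℝ, 0 ≤ c → c ≤ 1 → Real.exp (c*s) ≤ c*u + (1-c) := by
      intro c hc0 hc1
      have h := Real.geom_mean_le_arith_mean2_weighted hc0 (by linarith : (0:ℝ) ≤ 1-c)
        hu0.le zero_le_one (by ring)
      rw [Real.one_rpow, mul_one, mul_one] at h
      calc Real.exp (c*s) = u ^ c := by
            rw [Real.rpow_def_of_pos hu0, hu, Real.log_exp]; ring_nf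
        _ ≤ c*u + (1-c) := h
    have key1 : a*s + Real.log A ≤ Real.log (Real.exp l * (1-q) + q) := by
      have hX : Real.exp l * (1-q) + q = (a*u + (1-a))*A := by
        have haA : a*A = η*(1-q) := by rw [ha, div_mul_cancel₀ _ (ne_of_gt hApos)]
        calc Real.exp l * (1-q) + q = (a*A)*u + (A - a*A) := by
              rw [haA, hel, hA]; ring
          _ = (a*u + (1-a))*A := by ring
      have hXpos : 0 < Real.exp l * (1-q) + q :=
        add_pos (mul_pos (Real.exp_pos l) (by linarith)) hq0
      rw [Real.le_log_iff_exp_le hXpos]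
      rw [Real.exp_add, Real.exp_log hApos, hX]
      exact mul_le_mul_of_nonneg_right (bern a ha0 ha1) hApos.le
    have key2 : b*s + Real.log B ≤ Real.log (Real.exp l * q + (1-q)) := by
      have hX : Real.exp l * q + (1-q) = (b*u + (1-b))*B := by
        have hbB : b*B = η*q := by rw [hb, div_mul_cancel₀ _ (ne_of_gt hBpos)]
        calc Real.exp l * q + (1-q) = (b*B)*u + (B - b*B) := by
              rw [hbB, hel, hB]; ring
          _ = (b*u + (1-b))*B := by ring
      have hXpos : 0 < Real.exp l * q + (1-q) :=
        add_pos (mul_pos (Real.exp_pos l) hq0) (by linarith)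
      rw [Real.le_log_iff_exp_le hXpos]
      rw [Real.exp_add, Real.exp_log hBpos, hX]
      exact mul_le_mul_of_nonneg_right (bern b hb0 hb1) hBpos.le
    have hLam : Lam q θ (Real.log η) + w*s ≤ Lam q θ l := by
      rw [hLamL, Lam]
      have h1 := mul_le_mul_of_nonneg_left key1 (by linarith : (0:ℝ) ≤ 1-θ)
      have h2 := mul_le_mul_of_nonneg_left key2 hθ0
      rw [mul_add] at h1 h2
      have hw' : w*s = (1-θ)*(a*s) + θ*(b*s) := by rw [← hstat]; ring
      linarith [h1, h2, hw']
    have hrate : rateI q θ w = Real.log η * w - Lam q θ (Real.log η) := by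
      rw [rateI, hLamL, ← hη, hA, hB]; ring_nf
    rw [hrate]
    have : l * w = Real.log η * w + w * s := by rw [hs]; ring
    linarith [hLam, this.le]
  · rw [rateI, hLamL, ← hη, hA, hB]; ring_nf
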